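/- For any binary matrix M ∈ {0,1}^{m×n}, defining disc₀⁺(M) as the maximum of xᵀ(M - pJ)y over x ∈ [-1,1]^m, y ∈ [-1,1]^n, one has disc₀⁺(M) ≤ 12·disc⁺(M). -/

import Mathlib

open Finset

/-- Number of 1 entries of the submatrix of `M` with rows `X` and columns `Y`
(for a 0/1 matrix this is just the sum of its entries). -/
noncomputable def ones {m n : ℕ} (M : Matrix (Fin m) (Fin n) ℝ)
    (X : Finset (Fin m)) (Y : Finset (Fin n)) : ℝ :=
  ∑ i ∈ X, ∑ j ∈ Y, M i j

/-- The density `p = |M|/(mn)`. -/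
noncomputable def dens {m n : ℕ} (M : Matrix (Fin m) (Fin n) ℝ) : ℝ :=
  ones M univ univ / (m * n)

/-- `disc(X,Y) = |M[X×Y]| - p|X||Y|`. -/
noncomputable def disc {m n : ℕ} (M : Matrix (Fin m) (Fin n) ℝ)
    (X : Finset (Fin m)) (Y : Finset (Fin n)) : ℝ :=
  ones M X Y - dens M * X.card * Y.card

/-- Positive discrepancy `disc⁺(M) = max_{X,Y} disc(X,Y)`. -/
noncomputable def discP {m n : ℕ} (M : Matrix (Fin m) (Fin n) ℝ) : ℝ :=
  sup' univ ⟨(∅, ∅), mem_univ _⟩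
    (fun XY : Finset (Fin m) × Finset (Fin n) => disc M XY.1 XY.2)

/-- Negative discrepancy `disc⁻(M) = max_{X,Y} (-disc(X,Y))`. -/
noncomputable def discN {m n : ℕ} (M : Matrix (Fin m) (Fin n) ℝ) : ℝ :=
  sup' univ ⟨(∅, ∅), mem_univ _⟩
    (fun XY : Finset (Fin m) × Finset (Fin n) => -disc M XY.1 XY.2)

lemma lin_up {ι : Type*} [Fintype ι] (a c : ι → ℝ)
    (h0 : ∀ i, 0 ≤ a i) (h1 : ∀ i, a i ≤ 1) :
    ∑ i, a i * c i ≤ ∑ i ∈ univ.filter (fun i => 0 ≤ c i), c i := by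
  rw [← Finset.sum_filter_add_sum_filter_not univ (fun i => 0 ≤ c i) (fun i => a i * c i)]
  have h2 : ∑ i ∈ univ.filter (fun i => 0 ≤ c i), a i * c i
      ≤ ∑ i ∈ univ.filter (fun i => 0 ≤ c i), c i := by
    apply Finset.sum_le_sum
    intro i hi
    simp only [mem_filter] at hi
    nlinarith [h0 i, h1 i, hi.2]
  have h3 : ∑ i ∈ univ.filter (fun i => ¬ 0 ≤ c i), a i * c i ≤ 0 := by
    apply Finset.sum_nonpos
    intro i hi
    simp only [mem_filter] at hi
    exact mul_nonpos_of_nonneg_of_nonpos (h0 i) (le_of_not_ge hi.2)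
  linarith

lemma lin_down {ι : Type*} [Fintype ι] (a c : ι → ℝ)
    (h0 : ∀ i, 0 ≤ a i) (h1 : ∀ i, a i ≤ 1) :
    ∑ i ∈ univ.filter (fun i => c i ≤ 0), c i ≤ ∑ i, a i * c i := by
  rw [← Finset.sum_filter_add_sum_filter_not univ (fun i => c i ≤ 0) (fun i => a i * c i)]
  have h2 : ∑ i ∈ univ.filter (fun i => c i ≤ 0), c i
      ≤ ∑ i ∈ univ.filter (fun i => c i ≤ 0), a i * c i := by
    apply Finset.sum_le_sum
    intro i hi
    simp only [mem_filter] at hi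
    nlinarith [h0 i, h1 i, hi.2]
  have h3 : (0:ℝ) ≤ ∑ i ∈ univ.filter (fun i => ¬ c i ≤ 0), a i * c i := by
    apply Finset.sum_nonneg
    intro i hi
    simp only [mem_filter] at hi
    exact mul_nonneg (h0 i) (le_of_lt (lt_of_not_ge hi.2))
  linarith

lemma disc_eq_sum {m n : ℕ} (M : Matrix (Fin m) (Fin n) ℝ)
    (X : Finset (Fin m)) (Y : Finset (Fin n)) :
    disc M X Y = ∑ i ∈ X, ∑ j ∈ Y, (M i j - dens M) := by
  unfold disc ones
  simp only [Finset.sum_sub_distrib, Finset.sum_const, nsmul_eq_mul]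
  ring

lemma disc_le_discP {m n : ℕ} (M : Matrix (Fin m) (Fin n) ℝ)
    (X : Finset (Fin m)) (Y : Finset (Fin n)) : disc M X Y ≤ discP M :=
  Finset.le_sup' (f := fun XY : Finset (Fin m) × Finset (Fin n) => disc M XY.1 XY.2)
    (mem_univ (X, Y))

lemma disc_univ_univ {m n : ℕ} (M : Matrix (Fin m) (Fin n) ℝ) :
    disc M (univ : Finset (Fin m)) (univ : Finset (Fin n)) = 0 := by
  unfold disc _root_.dens
  simp only [Finset.card_univ, Fintype.card_fin]
  by_cases h : (m : ℝ) * n = 0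
  · rcases mul_eq_zero.1 h with h' | h'
    · have hm : m = 0 := by exact_mod_cast h'
      subst hm
      simp [ones]
    · have hn : n = 0 := by exact_mod_cast h'
      subst hn
      simp [ones]
  · field_simp
    rw [div_self h, sub_self, mul_zero]

lemma neg_disc_le {m n : ℕ} (M : Matrix (Fin m) (Fin n) ℝ)
    (X : Finset (Fin m)) (Y : Finset (Fin n)) : -disc M X Y ≤ 3 * discP M := by
  have key : ∀ (X' : Finset (Fin m)) (Y' : Finset (Fin n)),
      disc M X' Y' + disc M X'ᶜ Y' = disc M univ Y' := by
    intro X' Y'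
    simp only [disc_eq_sum]
    rw [Finset.sum_add_sum_compl]
  have key2 : ∀ (X' : Finset (Fin m)) (Y' : Finset (Fin n)),
      disc M X' Y' + disc M X' Y'ᶜ = disc M X' univ := by
    intro X' Y'
    simp only [disc_eq_sum, ← Finset.sum_add_distrib]
    congr 1
    ext i
    rw [Finset.sum_add_sum_compl]
  have h1 := key X Y
  have h2 := key X Yᶜ
  have h3 := key2 univ Y
  have h0 := disc_univ_univ M
  have b1 := disc_le_discP M Xᶜ Y
  have b2 := disc_le_discP M X Yᶜ
  have b3 := disc_le_discP M Xᶜ Yᶜ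
  linarith

lemma T_le {m n : ℕ} (M : Matrix (Fin m) (Fin n) ℝ)
    (a : Fin m → ℝ) (b : Fin n → ℝ)
    (ha0 : ∀ i, 0 ≤ a i) (ha1 : ∀ i, a i ≤ 1)
    (hb0 : ∀ j, 0 ≤ b j) (hb1 : ∀ j, b j ≤ 1) :
    ∃ X Y, ∑ i, ∑ j, a i * (M i j - dens M) * b j ≤ disc M X Y := by
  have step1 : ∑ i, ∑ j, a i * (M i j - dens M) * b j = ∑ i, a i * ∑ j, (M i j - dens M) * b j := by
    congr 1; ext i; rw [Finset.mul_sum]; congr 1; ext j; ring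
  set X := univ.filter (fun i => 0 ≤ ∑ j, (M i j - dens M) * b j) with hX
  have step2 : ∑ i, a i * ∑ j, (M i j - dens M) * b j ≤ ∑ i ∈ X, ∑ j, (M i j - dens M) * b j :=
    lin_up a _ ha0 ha1
  have step3 : ∑ i ∈ X, ∑ j, (M i j - dens M) * b j = ∑ j, b j * ∑ i ∈ X, (M i j - dens M) := by
    rw [Finset.sum_comm]
    congr 1; ext j; rw [Finset.mul_sum]; congr 1; ext i; ring
  set Y := univ.filter (fun j => 0 ≤ ∑ i ∈ X, (M i j - dens M)) with hY
  have step4 : ∑ j, b j * ∑ i ∈ X, (M i j - dens M) ≤ ∑ j ∈ Y, ∑ i ∈ X, (M i j - dens M) :=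
    lin_up b _ hb0 hb1
  refine ⟨X, Y, ?_⟩
  rw [disc_eq_sum]
  calc ∑ i, ∑ j, a i * (M i j - dens M) * b j ≤ ∑ j ∈ Y, ∑ i ∈ X, (M i j - dens M) := by
        rw [step1, ← step3] at *; linarith
    _ = ∑ i ∈ X, ∑ j ∈ Y, (M i j - dens M) := Finset.sum_comm

lemma T_ge {m n : ℕ} (M : Matrix (Fin m) (Fin n) ℝ)
    (a : Fin m → ℝ) (b : Fin n → ℝ)
    (ha0 : ∀ i, 0 ≤ a i) (ha1 : ∀ i, a i ≤ 1)
    (hb0 : ∀ j, 0 ≤ b j) (hb1 : ∀ j, b j ≤ 1) :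
    ∃ X Y, disc M X Y ≤ ∑ i, ∑ j, a i * (M i j - dens M) * b j := by
  have step1 : ∑ i, ∑ j, a i * (M i j - dens M) * b j = ∑ i, a i * ∑ j, (M i j - dens M) * b j := by
    congr 1; ext i; rw [Finset.mul_sum]; congr 1; ext j; ring
  set X := univ.filter (fun i => (∑ j, (M i j - dens M) * b j) ≤ 0) with hX
  have step2 : ∑ i ∈ X, ∑ j, (M i j - dens M) * b j ≤ ∑ i, a i * ∑ j, (M i j - dens M) * b j :=
    lin_down a _ ha0 ha1
  have step3 : ∑ i ∈ X, ∑ j, (M i j - dens M) * b j = ∑ j, b j * ∑ i ∈ X, (M i j - dens M) := by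
    rw [Finset.sum_comm]
    congr 1; ext j; rw [Finset.mul_sum]; congr 1; ext i; ring
  set Y := univ.filter (fun j => (∑ i ∈ X, (M i j - dens M)) ≤ 0) with hY
  have step4 : ∑ j ∈ Y, ∑ i ∈ X, (M i j - dens M) ≤ ∑ j, b j * ∑ i ∈ X, (M i j - dens M) :=
    lin_down b _ hb0 hb1
  refine ⟨X, Y, ?_⟩
  rw [disc_eq_sum]
  calc ∑ i ∈ X, ∑ j ∈ Y, (M i j - dens M) = ∑ j ∈ Y, ∑ i ∈ X, (M i j - dens M) := Finset.sum_comm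
    _ ≤ ∑ i, ∑ j, a i * (M i j - dens M) * b j := by rw [step1, ← step3] at *; linarith

lemma T_le' {m n : ℕ} (M : Matrix (Fin m) (Fin n) ℝ)
    (a : Fin m → ℝ) (b : Fin n → ℝ)
    (ha0 : ∀ i, 0 ≤ a i) (ha1 : ∀ i, a i ≤ 1)
    (hb0 : ∀ j, 0 ≤ b j) (hb1 : ∀ j, b j ≤ 1) :
    ∑ i, ∑ j, a i * (M i j - dens M) * b j ≤ discP M := by
  obtain ⟨X, Y, h⟩ := T_le M a b ha0 ha1 hb0 hb1
  exact h.trans (disc_le_discP M X Y)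

lemma negT_le {m n : ℕ} (M : Matrix (Fin m) (Fin n) ℝ)
    (a : Fin m → ℝ) (b : Fin n → ℝ)
    (ha0 : ∀ i, 0 ≤ a i) (ha1 : ∀ i, a i ≤ 1)
    (hb0 : ∀ j, 0 ≤ b j) (hb1 : ∀ j, b j ≤ 1) :
    -(∑ i, ∑ j, a i * (M i j - dens M) * b j) ≤ 3 * discP M := by
  obtain ⟨X, Y, h⟩ := T_ge M a b ha0 ha1 hb0 hb1
  have := neg_disc_le M X Y
  linarith

lemma pos_part_sub (r : ℝ) : max r 0 - max (-r) 0 = r := by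
  rcases le_total 0 r with h | h
  · rw [max_eq_left h, max_eq_right (neg_nonpos.2 h)]; ring
  · rw [max_eq_right h, max_eq_left (neg_nonneg.2 h)]; ring

/-- `disc₀⁺(M) ≤ 12·disc⁺(M)`: the value of the bilinear relaxation at any point of
`[-1,1]^m × [-1,1]^n` is at most `12·disc⁺(M)`. -/
theorem stmt2 (m n : ℕ) (M : Matrix (Fin m) (Fin n) ℝ)
    (hbin : ∀ i j, M i j = 0 ∨ M i j = 1)
    (x : Fin m → ℝ) (y : Fin n → ℝ)
    (hx : ∀ i, |x i| ≤ 1) (hy : ∀ j, |y j| ≤ 1) :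
    ∑ i, ∑ j, x i * (M i j - dens M) * y j ≤ 12 * discP M := by
  set xp : Fin m → ℝ := fun i => max (x i) 0 with hxp
  set xm : Fin m → ℝ := fun i => max (-x i) 0 with hxm
  set yp : Fin n → ℝ := fun j => max (y j) 0 with hyp
  set ym : Fin n → ℝ := fun j => max (-y j) 0 with hym
  have hxp0 : ∀ i, 0 ≤ xp i := fun i => le_max_right _ _
  have hxm0 : ∀ i, 0 ≤ xm i := fun i => le_max_right _ _
  have hyp0 : ∀ j, 0 ≤ yp j := fun j => le_max_right _ _
  have hym0 : ∀ j, 0 ≤ ym j := fun j => le_max_right _ _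
  have hxp1 : ∀ i, xp i ≤ 1 := fun i => max_le (le_of_abs_le (hx i)) zero_le_one
  have hxm1 : ∀ i, xm i ≤ 1 := fun i =>
    max_le (le_of_abs_le ((abs_neg (x i)).symm ▸ hx i)) zero_le_one
  have hyp1 : ∀ j, yp j ≤ 1 := fun j => max_le (le_of_abs_le (hy j)) zero_le_one
  have hym1 : ∀ j, ym j ≤ 1 := fun j =>
    max_le (le_of_abs_le ((abs_neg (y j)).symm ▸ hy j)) zero_le_one
  have hxd : ∀ i, x i = xp i - xm i := fun i => (pos_part_sub (x i)).symm
  have hyd : ∀ j, y j = yp j - ym j := fun j => (pos_part_sub (y j)).symm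
  have key : ∑ i, ∑ j, x i * (M i j - dens M) * y j
      = (∑ i, ∑ j, xp i * (M i j - dens M) * yp j) - (∑ i, ∑ j, xp i * (M i j - dens M) * ym j)
        - (∑ i, ∑ j, xm i * (M i j - dens M) * yp j) + (∑ i, ∑ j, xm i * (M i j - dens M) * ym j) := by
    simp only [← Finset.sum_sub_distrib, ← Finset.sum_add_distrib]
    congr 1; ext i; congr 1; ext j
    rw [hxd i, hyd j]; ring
  have t1 := T_le' M xp yp hxp0 hxp1 hyp0 hyp1
  have t2 := negT_le M xp ym hxp0 hxp1 hym0 hym1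
  have t3 := negT_le M xm yp hxm0 hxm1 hyp0 hyp1
  have t4 := T_le' M xm ym hxm0 hxm1 hym0 hym1
  have h00 : disc M ∅ ∅ = 0 := by simp [disc, ones]
  have hd0 : 0 ≤ discP M := h00 ▸ disc_le_discP M ∅ ∅
  rw [key]
  linarith
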